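/- Consider the SITR system with vaccination term λS/N₀ where β, ρ are continuous with 0 ≤ β(t), ρ(t) ≤ 1 and α, γ, δ, λ, N₀ > 0. Suppose (S, I, T, R) solves the system on [0,∞) with nonnegative initial data summing to N₀, and suppose the solution components remain nonnegative. Then S(t) + I(t) + T(t) → 0 and R(t) → N₀ as t → ∞; i.e., the disease-free equilibrium (0,0,0,N₀) is globally attracting. -/

import Mathlib

/-!
The infected-type compartments `V = S + I + T` leave the system at rate
`λ S / N₀ + γ I + δ T ≥ c V` with `c = min γ (min δ (λ / N₀)) > 0`, so by Grönwall
`V t ≤ V 0 * exp (-c t)` and `V → 0`. The total population `V + R` has zero derivative,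
hence stays equal to `N₀`, and `R = N₀ - V → N₀`.
-/

open Filter Set Real Topology

theorem le_mul_exp_of_hasDerivAt_le_mul {f f' : ℝ → ℝ} {K a : ℝ}
    (hf : ∀ t ∈ Ici a, HasDerivAt f (f' t) t) (bound : ∀ t ∈ Ici a, f' t ≤ K * f t)
    {t : ℝ} (ht : a ≤ t) : f t ≤ f a * exp (K * (t - a)) := by
  have h := le_gronwallBound_of_liminf_deriv_right_le (f' := f') (δ := f a) (K := K) (ε := 0)
    (fun x hx => (hf x hx.1).continuousAt.continuousWithinAt)
    (fun x hx _ hr => (hf x hx.1).hasDerivWithinAt.liminf_right_slope_le hr) le_rfl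
    (fun x hx => by simpa using bound x hx.1) t ⟨ht, le_rfl⟩
  rwa [gronwallBound_ε0] at h

theorem tendsto_zero_of_hasDerivAt_le_neg_mul {f f' : ℝ → ℝ} {c a : ℝ} (hc : 0 < c)
    (hf : ∀ t ∈ Ici a, HasDerivAt f (f' t) t) (bound : ∀ t ∈ Ici a, f' t ≤ -c * f t)
    (hnonneg : ∀ t ∈ Ici a, 0 ≤ f t) : Tendsto f atTop (𝓝 0) := by
  have hexp : Tendsto (fun t => f a * exp (-c * (t - a))) atTop (𝓝 0) := by
    have hlin : Tendsto (fun t => -c * (t - a)) atTop atBot :=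
      tendsto_atTop_add_const_right _ (-a) tendsto_id |>.const_mul_atTop_of_neg (neg_lt_zero.2 hc)
    simpa using (tendsto_exp_atBot.comp hlin).const_mul (f a)
  exact squeeze_zero' (eventually_atTop.2 ⟨a, hnonneg⟩)
    (eventually_atTop.2 ⟨a, fun t ht => le_mul_exp_of_hasDerivAt_le_mul hf bound ht⟩) hexp

theorem eq_of_hasDerivAt_zero_Ici {f : ℝ → ℝ} {a : ℝ} (hf : ∀ t ∈ Ici a, HasDerivAt f 0 t)
    {t : ℝ} (ht : a ≤ t) : f t = f a :=
  constant_of_has_deriv_right_zero (fun x hx => (hf x hx.1).continuousAt.continuousWithinAt)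
    (fun x hx => (hf x hx.1).hasDerivWithinAt) t ⟨ht, le_rfl⟩

theorem sitr_disease_free_globally_attracting_general
    (α γ δ lam N₀ : ℝ) (hγ : 0 < γ) (hδ : 0 < δ) (hlam : 0 < lam)
    (hN₀ : 0 < N₀)
    (β ρ S I T R : ℝ → ℝ)
    (hS : ∀ t, 0 ≤ t → HasDerivAt S (-(α * β t * I t * S t / N₀) - lam * S t / N₀) t)
    (hI : ∀ t, 0 ≤ t → HasDerivAt I (α * β t * I t * S t / N₀ - (γ + ρ t) * I t) t)
    (hT : ∀ t, 0 ≤ t → HasDerivAt T (ρ t * I t - δ * T t) t)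
    (hR : ∀ t, 0 ≤ t → HasDerivAt R (γ * I t + δ * T t + lam * S t / N₀) t)
    (hinit : S 0 + I 0 + T 0 + R 0 = N₀)
    (hpos : ∀ t, 0 ≤ t → 0 ≤ S t ∧ 0 ≤ I t ∧ 0 ≤ T t ∧ 0 ≤ R t) :
    Tendsto (fun t => S t + I t + T t) atTop (nhds 0) ∧
    Tendsto R atTop (nhds N₀) := by
  set c := min γ (min δ (lam / N₀))
  have hc : 0 < c := lt_min hγ (lt_min hδ (div_pos hlam hN₀))
  have hV' : ∀ t ∈ Ici (0 : ℝ), HasDerivAt (fun t => S t + I t + T t)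
      (-(lam * S t / N₀) - γ * I t - δ * T t) t := fun t ht =>
    (((hS t ht).add (hI t ht)).add (hT t ht)).congr_deriv (by ring)
  have hdecay : ∀ t ∈ Ici (0 : ℝ),
      -(lam * S t / N₀) - γ * I t - δ * T t ≤ -c * (S t + I t + T t) := by
    intro t ht
    obtain ⟨hSt, hIt, hTt, -⟩ := hpos t ht
    have hcS := mul_le_mul_of_nonneg_right (min_le_of_right_le (min_le_right _ _) : c ≤ _) hSt
    have hcI := mul_le_mul_of_nonneg_right (min_le_left _ _ : c ≤ γ) hIt
    have hcT := mul_le_mul_of_nonneg_right (min_le_of_right_le (min_le_left _ _) : c ≤ δ) hTt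
    rw [div_mul_eq_mul_div] at hcS
    linarith
  have hV := tendsto_zero_of_hasDerivAt_le_neg_mul hc hV' hdecay fun t ht => by
    obtain ⟨hSt, hIt, hTt, -⟩ := hpos t ht
    positivity
  have htotal : ∀ t ∈ Ici (0 : ℝ), S t + I t + T t + R t = N₀ := fun t ht =>
    (eq_of_hasDerivAt_zero_Ici (fun x hx => ((hV' x hx).add (hR x hx)).congr_deriv (by ring))
      ht).trans hinit
  refine ⟨hV, ?_⟩
  have hR_eq : (fun t => N₀ - (S t + I t + T t)) =ᶠ[atTop] R :=
    eventually_atTop.2 ⟨0, fun t ht => by linarith [htotal t ht]⟩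
  simpa using (tendsto_const_nhds.sub hV).congr' hR_eq

/-- Global attractivity of the disease-free equilibrium `(0, 0, 0, N₀)` for the
SITR system with vaccination term `λ S / N₀`. -/
theorem sitr_disease_free_globally_attracting
    (α γ δ lam N₀ : ℝ) (hα : 0 < α) (hγ : 0 < γ) (hδ : 0 < δ) (hlam : 0 < lam)
    (hN₀ : 0 < N₀)
    (β ρ S I T R : ℝ → ℝ)
    (hβc : Continuous β) (hρc : Continuous ρ)
    (hβ : ∀ t, 0 ≤ β t ∧ β t ≤ 1) (hρ : ∀ t, 0 ≤ ρ t ∧ ρ t ≤ 1)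
    (hS : ∀ t, 0 ≤ t → HasDerivAt S (-(α * β t * I t * S t / N₀) - lam * S t / N₀) t)
    (hI : ∀ t, 0 ≤ t → HasDerivAt I (α * β t * I t * S t / N₀ - (γ + ρ t) * I t) t)
    (hT : ∀ t, 0 ≤ t → HasDerivAt T (ρ t * I t - δ * T t) t)
    (hR : ∀ t, 0 ≤ t → HasDerivAt R (γ * I t + δ * T t + lam * S t / N₀) t)
    (hinit : S 0 + I 0 + T 0 + R 0 = N₀)
    (hS0 : 0 ≤ S 0) (hI0 : 0 ≤ I 0) (hT0 : 0 ≤ T 0) (hR0 : 0 ≤ R 0)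
    (hpos : ∀ t, 0 ≤ t → 0 ≤ S t ∧ 0 ≤ I t ∧ 0 ≤ T t ∧ 0 ≤ R t) :
    Tendsto (fun t => S t + I t + T t) atTop (nhds 0) ∧
    Tendsto R atTop (nhds N₀) :=
  sitr_disease_free_globally_attracting_general α γ δ lam N₀ hγ hδ hlam hN₀ β ρ S I T R hS hI hT hR
    hinit hpos
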